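/- Let (Ȳ',Z̄',Ū',K̄') be any solution of the constrained BSDE. Then for every t∈[0,T], ℙ̄-a.s., Ȳ'_t + ∫_t^T Z̄'_s dW_s ≥ ξ 1_{η≥T} + ∫_{t∧η}^{T∧η} f_s ds + h_η 1_{t<η≤T}. -/

import Mathlib

open MeasureTheory ProbabilityTheory Filter Set
open scoped ENNReal NNReal

noncomputable section

namespace OSRand

variable {Ω Ω' : Type*}

/-- The predictable σ-algebra on `ℝ × Ω` associated with a filtration `F`,
generated by the sets `(a,b] × A` with `A ∈ F a` and `{0} × A` with `A ∈ F 0`. -/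
def predictableSigma {mΩ : MeasurableSpace Ω} (F : Filtration ℝ mΩ) :
    MeasurableSpace (ℝ × Ω) :=
  MeasurableSpace.generateFrom
    {s | (∃ a b : ℝ, ∃ A : Set Ω, MeasurableSet[F a] A ∧ s = Set.Ioc a b ×ˢ A) ∨
      ∃ A : Set Ω, MeasurableSet[F 0] A ∧ s = ({0} : Set ℝ) ×ˢ A}

/-- A process is predictable if it is measurable w.r.t. the predictable σ-algebra. -/
def IsPredictable {mΩ : MeasurableSpace Ω} {E : Type*} [MeasurableSpace E]
    (F : Filtration ℝ mΩ) (X : ℝ → Ω → E) : Prop :=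
  @Measurable _ _ (predictableSigma F) _ fun p : ℝ × Ω => X p.1 p.2

/-- Membership in `ℋ²`: predictable and `𝔼∫_0^T |Z_s|² ds < ∞`. -/
def MemH2 {mΩ : MeasurableSpace Ω} {E : Type*} [NormedAddCommGroup E] [MeasurableSpace E]
    (F : Filtration ℝ mΩ) (P : Measure Ω) (T : ℝ) (Z : ℝ → Ω → E) : Prop :=
  IsPredictable F Z ∧
    (∫⁻ ω, ∫⁻ t in Set.Ioc (0:ℝ) T, (‖Z t ω‖₊ : ℝ≥0∞) ^ 2 ∂volume ∂P) < ⊤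

/-- Paths are càdlàg (right-continuous with left limits) on `[0,T]`. -/
def CadlagOn (T : ℝ) (Y : ℝ → Ω → ℝ) : Prop :=
  ∀ ω, (∀ t ∈ Set.Ico (0:ℝ) T, ContinuousWithinAt (fun s => Y s ω) (Set.Ici t) t) ∧
    ∀ t ∈ Set.Ioc (0:ℝ) T, ∃ l : ℝ, Tendsto (fun s => Y s ω) (nhdsWithin t (Set.Iio t)) (nhds l)

/-- Membership in `𝒮²`: adapted, càdlàg, `𝔼 sup_{t∈[0,T]} |Y_t|² < ∞`. -/
def MemS2 {mΩ : MeasurableSpace Ω} (F : Filtration ℝ mΩ) (P : Measure Ω) (T : ℝ)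
    (Y : ℝ → Ω → ℝ) : Prop :=
  Adapted F Y ∧ CadlagOn T Y ∧
    (∫⁻ ω, ⨆ t ∈ Set.Icc (0:ℝ) T, ((‖Y t ω‖₊ : ℝ≥0∞) ^ 2) ∂P) < ⊤

/-- Membership in `𝒮²_c`: members of `𝒮²` with continuous paths. -/
def MemS2c {mΩ : MeasurableSpace Ω} (F : Filtration ℝ mΩ) (P : Measure Ω) (T : ℝ)
    (Y : ℝ → Ω → ℝ) : Prop :=
  MemS2 F P T Y ∧ ∀ ω, ContinuousOn (fun t => Y t ω) (Set.Icc 0 T)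

/-- Membership in `𝒜²`: predictable members of `𝒮²` with nondecreasing paths and `K_0 = 0`. -/
def MemA2 {mΩ : MeasurableSpace Ω} (F : Filtration ℝ mΩ) (P : Measure Ω) (T : ℝ)
    (K : ℝ → Ω → ℝ) : Prop :=
  MemS2 F P T K ∧ IsPredictable F K ∧
    (∀ ω, MonotoneOn (fun t => K t ω) (Set.Icc 0 T)) ∧ ∀ ω, K 0 ω = 0

/-- Membership in `ℒ²` : predictable and `𝔼̄ ∫_0^T |U_s|² dA_s < ∞` where `A_t = t ∧ η`. -/
def MemL2 {mΩ : MeasurableSpace Ω} (F : Filtration ℝ mΩ) (P : Measure Ω) (T : ℝ)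
    (η : Ω → ℝ) (U : ℝ → Ω → ℝ) : Prop :=
  IsPredictable F U ∧
    (∫⁻ ω, ∫⁻ t in Set.Ioc (0:ℝ) (min T (η ω)), (‖U t ω‖₊ : ℝ≥0∞) ^ 2 ∂volume ∂P) < ⊤

variable [MeasurableSpace Ω] [MeasurableSpace Ω']

/-- The quadruple `(Y, Z, U, K)` is a solution of the constrained BSDE with jump
`Y_t + ∫_t^T Z_s dW_s + ∫_(t,T] U_s dN_s
   = ξ 1_{η ≥ T} + ∫_t^T f_s 1_{[0,η]}(s) ds + ∫_(t,T] h_s dN_s + K_T - K_t`,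
with the sign constraint `U_t ≤ 0`, `dA ⊗ dℙ̄`-a.e.  Here `N_t = 1_{η ≤ t}`, `A_t = t ∧ η`,
the integrals against `dN` are evaluated pathwise (`∫_(t,T] U dN = U_η 1_{t < η ≤ T}`) and
`SI Z t` stands for the stochastic integral `∫_t^T Z_s dW_s`. -/
def ConstrainedBSDESolution {m : ℕ} (Pb : Measure (Ω × Ω'))
    (Fb : Filtration ℝ (inferInstance : MeasurableSpace (Ω × Ω'))) (T : ℝ)
    (f h : ℝ → Ω → ℝ) (ξ : Ω → ℝ) (η : Ω' → ℝ)
    (SI : (ℝ → Ω × Ω' → (Fin m → ℝ)) → ℝ → Ω × Ω' → ℝ)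
    (Y : ℝ → Ω × Ω' → ℝ) (Z : ℝ → Ω × Ω' → Fin m → ℝ)
    (U : ℝ → Ω × Ω' → ℝ) (K : ℝ → Ω × Ω' → ℝ) : Prop :=
  MemS2 Fb Pb T Y ∧ MemH2 Fb Pb T Z ∧ MemL2 Fb Pb T (fun ωb => η ωb.2) U ∧ MemA2 Fb Pb T K ∧
    (∀ᵐ ωb ∂Pb, ∀ᵐ t ∂(volume.restrict (Set.Ioc (0:ℝ) (min T (η ωb.2)))), U t ωb ≤ 0) ∧
    (∀ᵐ ωb ∂Pb, ∀ t ∈ Set.Icc (0:ℝ) T,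
      Y t ωb + SI Z t ωb + (if t < η ωb.2 ∧ η ωb.2 ≤ T then U (η ωb.2) ωb else 0)
        = (if T ≤ η ωb.2 then ξ ωb.1 else 0)
          + (∫ s in t..T, if s ≤ η ωb.2 then f s ωb.1 else 0)
          + (if t < η ωb.2 ∧ η ωb.2 ≤ T then h (η ωb.2) ωb.1 else 0)
          + (K T ωb - K t ωb))

/-- Minimal solution of the constrained BSDE. -/
def MinimalSolution {m : ℕ} (Pb : Measure (Ω × Ω'))
    (Fb : Filtration ℝ (inferInstance : MeasurableSpace (Ω × Ω'))) (T : ℝ)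
    (f h : ℝ → Ω → ℝ) (ξ : Ω → ℝ) (η : Ω' → ℝ)
    (SI : (ℝ → Ω × Ω' → (Fin m → ℝ)) → ℝ → Ω × Ω' → ℝ)
    (Y : ℝ → Ω × Ω' → ℝ) (Z : ℝ → Ω × Ω' → Fin m → ℝ)
    (U : ℝ → Ω × Ω' → ℝ) (K : ℝ → Ω × Ω' → ℝ) : Prop :=
  ConstrainedBSDESolution Pb Fb T f h ξ η SI Y Z U K ∧
    ∀ Y' Z' U' K', ConstrainedBSDESolution Pb Fb T f h ξ η SI Y' Z' U' K' →
      ∀ᵐ ωb ∂Pb, ∀ t ∈ Set.Icc (0:ℝ) T, Y t ωb ≤ Y' t ωb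


/-- The triple `(Y, Z, K)` solves the reflected BSDE
`Y_t + ∫_t^T Z_s dW_s = ξ + ∫_t^T f_s ds + K_T - K_t`, `Y_t ≥ h_t` on `[0,T]`, together with
the Skorokhod minimality condition `∫_0^T (Y_s - h_s) dK_s = 0`; since `Y - h ≥ 0` is
continuous and `K` is continuous nondecreasing, the latter is expressed by the equivalent
flat-off condition: `K` is constant on every subinterval of `[0,T]` where `Y > h`.
`SI0 Z t` stands for the stochastic integral `∫_t^T Z_s dW_s`. -/
def ReflectedBSDESolution {mΩ : MeasurableSpace Ω} {m : ℕ} (P : Measure Ω)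
    (F : Filtration ℝ mΩ) (T : ℝ) (f h : ℝ → Ω → ℝ) (ξ : Ω → ℝ)
    (SI0 : (ℝ → Ω → Fin m → ℝ) → ℝ → Ω → ℝ)
    (Y : ℝ → Ω → ℝ) (Z : ℝ → Ω → Fin m → ℝ) (K : ℝ → Ω → ℝ) : Prop :=
  MemS2c F P T Y ∧ MemH2 F P T Z ∧ MemA2 F P T K ∧
    (∀ ω, ContinuousOn (fun t => K t ω) (Set.Icc 0 T)) ∧
    (∀ᵐ ω ∂P, ∀ t ∈ Set.Icc (0:ℝ) T,
      Y t ω + SI0 Z t ω = ξ ω + (∫ s in t..T, f s ω) + (K T ω - K t ω)) ∧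
    (∀ᵐ ω ∂P, ∀ t ∈ Set.Icc (0:ℝ) T, h t ω ≤ Y t ω) ∧
    (∀ᵐ ω ∂P, ∀ s ∈ Set.Icc (0:ℝ) T, ∀ t ∈ Set.Icc (0:ℝ) T, s ≤ t →
      (∀ u ∈ Set.Icc s t, h u ω < Y u ω) → K s ω = K t ω)

/-- The pair `(Y, Z)` solves the penalized BSDE
`Y_t + ∫_t^T Z_s dW_s = ξ + ∫_t^T f_s ds + n ∫_t^T (Y_s - h_s)⁻ ds`. -/
def PenalizedBSDESolution {mΩ : MeasurableSpace Ω} {m : ℕ} (P : Measure Ω)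
    (F : Filtration ℝ mΩ) (T : ℝ) (f h : ℝ → Ω → ℝ) (ξ : Ω → ℝ)
    (SI0 : (ℝ → Ω → Fin m → ℝ) → ℝ → Ω → ℝ) (n : ℕ)
    (Y : ℝ → Ω → ℝ) (Z : ℝ → Ω → Fin m → ℝ) : Prop :=
  MemS2c F P T Y ∧ MemH2 F P T Z ∧
    ∀ᵐ ω ∂P, ∀ t ∈ Set.Icc (0:ℝ) T,
      Y t ω + SI0 Z t ω
        = ξ ω + (∫ s in t..T, f s ω) + (n : ℝ) * ∫ s in t..T, max (h s ω - Y s ω) 0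

/-- The penalized BSDE with jump:
`Y_t + ∫_t^T Z_s dW_s + ∫_(t,T] U_s dN_s
  = ξ 1_{η ≥ T} + ∫_t^T f_s 1_{[0,η]}(s) ds + ∫_(t,T] h_s dN_s + n ∫_t^T (U_s)⁺ 1_{[0,η]}(s) ds`,
the integrals against `dN` being evaluated pathwise. -/
def PenalizedJumpBSDEEq {m : ℕ} (Pb : Measure (Ω × Ω')) (T : ℝ)
    (f h : ℝ → Ω → ℝ) (ξ : Ω → ℝ) (η : Ω' → ℝ)
    (SI : (ℝ → Ω × Ω' → (Fin m → ℝ)) → ℝ → Ω × Ω' → ℝ) (n : ℕ)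
    (Y : ℝ → Ω × Ω' → ℝ) (Z : ℝ → Ω × Ω' → Fin m → ℝ) (U : ℝ → Ω × Ω' → ℝ) : Prop :=
  ∀ᵐ ωb ∂Pb, ∀ t ∈ Set.Icc (0:ℝ) T,
    Y t ωb + SI Z t ωb + (if t < η ωb.2 ∧ η ωb.2 ≤ T then U (η ωb.2) ωb else 0)
      = (if T ≤ η ωb.2 then ξ ωb.1 else 0)
        + (∫ s in t..T, if s ≤ η ωb.2 then f s ωb.1 else 0)
        + (if t < η ωb.2 ∧ η ωb.2 ≤ T then h (η ωb.2) ωb.1 else 0)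
        + (n : ℝ) * ∫ s in t..T, (if s ≤ η ωb.2 then max (U s ωb) 0 else 0)

/-- The Doléans (Girsanov) density at time `T`:
`L^ν_T = exp(∫_0^{T∧η} (1-ν_s) ds) (1_{T<η} + ν_η 1_{T≥η})`. -/
def girsanovDensity (T : ℝ) (η : Ω' → ℝ) (ν : ℝ → Ω × Ω' → ℝ) (ωb : Ω × Ω') : ℝ :=
  Real.exp (∫ s in (0:ℝ)..(min T (η ωb.2)), (1 - ν s ωb)) *
    (if T < η ωb.2 then 1 else ν (η ωb.2) ωb)

/-- The equivalent probability `ℙ̄_ν = L^ν_T · ℙ̄` under which the compensator of `N`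
is `∫_0^· ν_s dA_s`. -/
def pNu (Pb : Measure (Ω × Ω')) (T : ℝ) (η : Ω' → ℝ) (ν : ℝ → Ω × Ω' → ℝ) :
    Measure (Ω × Ω') :=
  Pb.withDensity fun ωb => ENNReal.ofReal (girsanovDensity T η ν ωb)

/-- The set `𝒱` of admissible intensity controls: bounded positive predictable processes. -/
def Admissible (Fb : Filtration ℝ (inferInstance : MeasurableSpace (Ω × Ω')))
    (ν : ℝ → Ω × Ω' → ℝ) : Prop :=
  IsPredictable Fb ν ∧ (∃ C : ℝ, ∀ t ωb, ν t ωb ≤ C) ∧ ∀ t ωb, 0 < ν t ωb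

/-- The set `𝒱_n` of admissible controls with values in `(0, n]`. -/
def AdmissibleLE (Fb : Filtration ℝ (inferInstance : MeasurableSpace (Ω × Ω'))) (n : ℕ)
    (ν : ℝ → Ω × Ω' → ℝ) : Prop :=
  Admissible Fb ν ∧ ∀ t ωb, ν t ωb ≤ (n : ℝ)

/-- The reward functional `∫_{t∧η}^{T∧η} f_s ds + h_η 1_{t<η<T} + ξ 1_{η≥T}`. -/
def stopReward (T : ℝ) (f h : ℝ → Ω → ℝ) (ξ : Ω → ℝ) (η : Ω' → ℝ) (t : ℝ)
    (ωb : Ω × Ω') : ℝ :=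
  (∫ s in (min t (η ωb.2))..(min T (η ωb.2)), f s ωb.1)
    + (if t < η ωb.2 ∧ η ωb.2 < T then h (η ωb.2) ωb.1 else 0)
    + (if T ≤ η ωb.2 then ξ ωb.1 else 0)


section Aux

open MeasureTheory ProbabilityTheory

/-- The predictable σ-algebra is coarser than the product σ-algebra. -/
lemma predictableSigma_le' {Ω : Type*} {mΩ : MeasurableSpace Ω} (F : Filtration ℝ mΩ) :
    predictableSigma F ≤ (inferInstance : MeasurableSpace (ℝ × Ω)) := by
  refine MeasurableSpace.generateFrom_le ?_
  rintro s (⟨a, b, A, hA, rfl⟩ | ⟨A, hA, rfl⟩)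
  · exact measurableSet_Ioc.prod (F.le a A hA)
  · exact (measurableSet_singleton 0).prod (F.le 0 A hA)

/-- Expectation of `(min β η - α)⁺` for `η` unit-exponential. -/
lemma expMinLintegral {Ω' : Type*} [MeasurableSpace Ω'] (P' : Measure Ω')
    [IsProbabilityMeasure P'] (η : Ω' → ℝ) (hη : Measurable η)
    (hηlaw : ∀ t : ℝ, 0 ≤ t → P' {ω' | t < η ω'} = ENNReal.ofReal (Real.exp (-t)))
    (α β : ℝ) (hα : 0 ≤ α) (hαβ : α ≤ β) :
    ∫⁻ ω', ENNReal.ofReal (min β (η ω') - α) ∂P'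
      = ENNReal.ofReal (Real.exp (-α) - Real.exp (-β)) := by
  set g : Ω' → ℝ := fun ω' => max (min β (η ω') - α) 0 with hg
  have hgmeas : Measurable g := ((measurable_const.min hη).sub measurable_const).max
    measurable_const
  have h1 : ∀ ω', ENNReal.ofReal (min β (η ω') - α) = ENNReal.ofReal (g ω') := by
    intro ω'
    rcases le_total (min β (η ω') - α) 0 with h | h
    · rw [ENNReal.ofReal_eq_zero.2 h, hg]; simp [max_eq_right h]
    · rw [hg]; simp [max_eq_left h]
  rw [lintegral_congr h1,
    lintegral_eq_lintegral_meas_lt (f := g) P'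
      (Filter.Eventually.of_forall fun ω' => le_max_right _ _) hgmeas.aemeasurable]
  have h2 : ∀ t ∈ Set.Ioi (0:ℝ), P' {a | t < g a}
      = Set.indicator (Set.Ioo 0 (β - α)) (fun t => ENNReal.ofReal (Real.exp (-(t + α)))) t := by
    intro t ht
    simp only [Set.mem_Ioi] at ht
    by_cases hc : t < β - α
    · have hset : {a | t < g a} = {ω' | t + α < η ω'} := by
        ext ω'
        simp only [Set.mem_setOf_eq, hg, lt_max_iff, lt_min_iff]
        constructor
        · rintro (h | h)
          · rw [lt_sub_iff_add_lt, lt_min_iff] at h; exact h.2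
          · linarith
        · intro h; left; rw [lt_sub_iff_add_lt, lt_min_iff]; exact ⟨by linarith, h⟩
      rw [hset, hηlaw _ (by linarith), Set.indicator_of_mem (Set.mem_Ioo.mpr ⟨ht, hc⟩) _]
    · have hset : {a | t < g a} = (∅ : Set Ω') := by
        ext ω'
        simp only [Set.mem_setOf_eq, Set.mem_empty_iff_false, iff_false, not_lt, hg,
          max_le_iff]
        constructor
        · have : min β (η ω') - α ≤ β - α := by
            have := min_le_left β (η ω'); linarith
          linarith [not_lt.1 hc]
        · linarith
      rw [hset, Set.indicator_of_notMem (by simp only [Set.mem_Ioo, not_and]; intro _; linarith [not_lt.1 hc]), measure_empty]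
  rw [setLIntegral_congr_fun measurableSet_Ioi h2,
    lintegral_indicator measurableSet_Ioo, Measure.restrict_restrict measurableSet_Ioo,
    Set.inter_eq_left.2 Set.Ioo_subset_Ioi_self]
  set c : ℝ := β - α with hcdef
  have hc0 : 0 ≤ c := by simp [hcdef]; linarith
  have hint : IntegrableOn (fun t => Real.exp (-(t + α))) (Set.Ioo 0 c) volume := by
    have : Continuous fun t : ℝ => Real.exp (-(t + α)) := by continuity
    exact (this.integrableOn_Icc).mono_set Set.Ioo_subset_Icc_self
  rw [← ofReal_integral_eq_lintegral_ofReal hint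
      (Filter.Eventually.of_forall fun t => (Real.exp_pos _).le)]
  congr 1
  have : ∫ t in Set.Ioo 0 c, Real.exp (-(t + α)) = ∫ t in (0:ℝ)..c, Real.exp (-(t + α)) := by
    rw [intervalIntegral.integral_of_le hc0, MeasureTheory.integral_Ioc_eq_integral_Ioo]
  rw [this]
  have hrw : ∀ t : ℝ, Real.exp (-(t + α)) = Real.exp (-α) * Real.exp (-t) := by
    intro t; rw [← Real.exp_add]; ring_nf
  simp_rw [hrw]
  rw [intervalIntegral.integral_const_mul]
  have : (∫ t in (0:ℝ)..c, Real.exp (-t)) = Real.exp 0 - Real.exp (-c) := by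
    have := intervalIntegral.integral_comp_neg (a := (0:ℝ)) (b := c) (fun x => Real.exp x)
    rw [this, integral_exp]
    simp
  rw [this, Real.exp_zero]
  have : Real.exp (-α) * Real.exp (-c) = Real.exp (-β) := by
    rw [← Real.exp_add]; congr 1; simp [hcdef]; ring
  rw [mul_sub, mul_one, this]

/-- The σ-algebra of sets whose trace on `univ ×ˢ S'` is a cylinder over `Ω`. -/
def sliceMS {Ω Ω' : Type*} (mΩ : MeasurableSpace Ω) (S' : Set Ω') :
    MeasurableSpace (Ω × Ω') where
  MeasurableSet' A := ∃ B : Set Ω, MeasurableSet[mΩ] B ∧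
    A ∩ (Set.univ ×ˢ S') = (B ×ˢ (Set.univ : Set Ω')) ∩ (Set.univ ×ˢ S')
  measurableSet_empty := ⟨∅, MeasurableSet.empty, by simp⟩
  measurableSet_compl := by
    rintro A ⟨B, hB, hAB⟩
    refine ⟨Bᶜ, hB.compl, ?_⟩
    ext x
    have hx := Set.ext_iff.mp hAB x
    simp only [Set.mem_inter_iff, Set.mem_prod, Set.mem_univ, true_and, and_true,
      Set.mem_compl_iff] at hx ⊢
    tauto
  measurableSet_iUnion := by
    intro g hg
    choose B hB hAB using hg
    refine ⟨⋃ n, B n, MeasurableSet.iUnion hB, ?_⟩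
    rw [Set.iUnion_inter]
    simp_rw [hAB]
    rw [← Set.iUnion_inter, ← Set.iUnion_prod_const]

/-- Trace of the natural filtration of `(W, N)` on `{α < η}` is generated by `Ω` alone. -/
lemma natural_trace {Ω Ω' : Type*} [mΩ : MeasurableSpace Ω] [mΩ' : MeasurableSpace Ω']
    {m : ℕ} (W : ℝ → Ω → Fin m → ℝ) (F : Filtration ℝ mΩ) (hWadapted : Adapted F W)
    (η : Ω' → ℝ)
    (hWN : ∀ t : ℝ, StronglyMeasurable
      fun ωb : Ω × Ω' => (W t ωb.1, if η ωb.2 ≤ t then (1:ℝ) else 0))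
    (α : ℝ) (A : Set (Ω × Ω'))
    (hA : MeasurableSet[(Filtration.natural
      (fun t ωb => (W t ωb.1, if η ωb.2 ≤ t then (1:ℝ) else 0)) hWN) α] A) :
    ∃ B : Set Ω, MeasurableSet[mΩ] B ∧
      A ∩ (Set.univ ×ˢ {ω' | α < η ω'}) = (B ×ˢ Set.univ) ∩ (Set.univ ×ˢ {ω' | α < η ω'}) := by
  have hle : (Filtration.natural
      (fun t ωb => (W t ωb.1, if η ωb.2 ≤ t then (1:ℝ) else 0)) hWN) α
      ≤ sliceMS mΩ {ω' | α < η ω'} := by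
    refine iSup₂_le fun j hj => ?_
    rintro A' ⟨C, hC, rfl⟩
    refine ⟨(fun ω => (W j ω, (0:ℝ))) ⁻¹' C, ?_, ?_⟩
    · exact (((hWadapted j).mono (F.le j) le_rfl).prodMk measurable_const) hC
    · ext ⟨ω, ω'⟩
      simp only [Set.mem_inter_iff, Set.mem_preimage, Set.mem_prod, Set.mem_univ, true_and,
        and_true, Set.mem_setOf_eq]
      constructor
      · rintro ⟨hmem, hαη⟩
        rw [if_neg (by linarith)] at hmem
        exact ⟨hmem, hαη⟩
      · rintro ⟨hmem, hαη⟩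
        rw [if_neg (by linarith)]
        exact ⟨hmem, hαη⟩
  exact hle A hA

/-- The kernel `ωb ↦ Leb restricted to `(0, c ωb]`. -/
noncomputable def iocKernel {Ωb : Type*} [MeasurableSpace Ωb] (c : Ωb → ℝ)
    (hc : Measurable c) : Kernel Ωb ℝ where
  toFun ωb := volume.restrict (Set.Ioc 0 (c ωb))
  measurable' := by
    refine Measure.measurable_of_measurable_coe _ fun s hs => ?_
    simp_rw [Measure.restrict_apply hs]
    have hmono : Monotone fun x : ℝ => volume (s ∩ Set.Ioc 0 x) := fun x y hxy =>
      measure_mono (Set.inter_subset_inter_right _ (Set.Ioc_subset_Ioc_right hxy))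
    exact hmono.measurable.comp hc

@[simp] lemma iocKernel_apply {Ωb : Type*} [MeasurableSpace Ωb] (c : Ωb → ℝ)
    (hc : Measurable c) (ωb : Ωb) :
    iocKernel c hc ωb = volume.restrict (Set.Ioc 0 (c ωb)) := rfl

/-- Rewriting the truncated integral of `f` as an integral up to `min · e`. -/
lemma integral_indicator_min {f : ℝ → ℝ} {T t e : ℝ} (ht : 0 ≤ t) (htT : t ≤ T)
    (hmeas : Measurable f) (hint : IntegrableOn f (Set.Icc 0 T) volume) :
    ∫ s in t..T, (if s ≤ e then f s else 0) = ∫ s in min t e..min T e, f s := by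
  rcases le_or_gt T e with hTe | heT
  · rw [min_eq_left (htT.trans hTe), min_eq_left hTe]
    refine intervalIntegral.integral_congr fun s hs => ?_
    rw [Set.uIcc_of_le htT] at hs
    rw [if_pos (hs.2.trans hTe)]
  · rcases lt_or_ge e t with het | hte
    · rw [min_eq_right het.le, min_eq_right (het.trans_le htT).le]
      have hzero : Set.EqOn (fun s => if s ≤ e then f s else 0) (fun _ => (0:ℝ))
          (Set.uIcc t T) := by
        intro s hs
        rw [Set.uIcc_of_le htT] at hs
        simp only
        rw [if_neg (by linarith [hs.1])]
      rw [intervalIntegral.integral_congr hzero, intervalIntegral.integral_zero,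
        intervalIntegral.integral_same]
    · rw [min_eq_left hte, min_eq_right heT.le]
      have hgi : IntegrableOn (fun s => if s ≤ e then f s else 0) (Set.Icc 0 T) volume := by
        have hg : (fun s => if s ≤ e then f s else 0) = (Set.Iic e).indicator f := by
          ext s; simp [Set.indicator_apply, Set.mem_Iic]
        rw [hg]
        exact hint.indicator measurableSet_Iic
      have h1 : IntervalIntegrable (fun s => if s ≤ e then f s else 0) volume t e := by
        rw [intervalIntegrable_iff]
        refine hgi.mono_set ?_
        rw [Set.uIoc_of_le hte]
        exact (Set.Ioc_subset_Icc_self).trans (Set.Icc_subset_Icc ht (heT.le))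
      have h2 : IntervalIntegrable (fun s => if s ≤ e then f s else 0) volume e T := by
        rw [intervalIntegrable_iff]
        refine hgi.mono_set ?_
        rw [Set.uIoc_of_le heT.le]
        exact (Set.Ioc_subset_Icc_self).trans (Set.Icc_subset_Icc (ht.trans hte) le_rfl)
      rw [← intervalIntegral.integral_add_adjacent_intervals h1 h2]
      have hA : (∫ s in t..e, (if s ≤ e then f s else 0)) = ∫ s in t..e, f s := by
        refine intervalIntegral.integral_congr fun s hs => ?_
        rw [Set.uIcc_of_le hte] at hs
        rw [if_pos hs.2]
      have hB : (∫ s in e..T, (if s ≤ e then f s else 0)) = 0 := by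
        have : ∀ᵐ s ∂(volume : Measure ℝ), s ∈ Set.uIoc e T →
            (if s ≤ e then f s else 0) = (0:ℝ) := by
          refine Filter.Eventually.of_forall fun s hs => ?_
          rw [Set.uIoc_of_le heT.le] at hs
          rw [if_neg (not_le.2 hs.1)]
        rw [intervalIntegral.integral_congr_ae this]
        simp
      rw [hA, hB, add_zero]

end Aux

/-- For any solution (Ȳ', Z̄', Ū', K̄') of the constrained BSDE,
ℙ̄-a.s., for every t ∈ [0,T],
Ȳ'_t + ∫_t^T Z̄'_s dW_s ≥ ξ 1_{η≥T} + ∫_{t∧η}^{T∧η} f_s ds + h_η 1_{t<η≤T}. -/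
theorem statement9
    {Ω Ω' : Type*} [MeasurableSpace Ω] [MeasurableSpace Ω']
    (P : Measure Ω) [IsProbabilityMeasure P] (P' : Measure Ω') [IsProbabilityMeasure P']
    {m : ℕ} (W : ℝ → Ω → Fin m → ℝ) (F : Filtration ℝ (inferInstance : MeasurableSpace Ω))
    -- `W` is an `m`-dimensional `F`-Brownian motion
    (hW0 : ∀ ω, W 0 ω = 0)
    (hWcont : ∀ ω, Continuous fun t => W t ω)
    (hWadapted : Adapted F W)
    (hWlaw : ∀ s t : ℝ, 0 ≤ s → s ≤ t →
      Measure.map (fun ω => W t ω - W s ω) P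
        = Measure.pi fun _ : Fin m => gaussianReal 0 (Real.toNNReal (t - s)))
    (hWindep : ∀ s t : ℝ, 0 ≤ s → s ≤ t →
      Indep (MeasurableSpace.comap (fun ω => W t ω - W s ω) inferInstance) (F s) P)
    (T : ℝ) (hT : 0 < T)
    -- the data f, h, ξ of the optimal stopping problem
    (f h : ℝ → Ω → ℝ) (ξ : Ω → ℝ)
    (hf : MemH2 F P T f) (hh : MemS2c F P T h)
    (hξ : StronglyMeasurable[F T] ξ) (hξ2 : (∫⁻ ω, (‖ξ ω‖₊ : ℝ≥0∞) ^ 2 ∂P) < ⊤)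
    (hξh : ∀ᵐ ω ∂P, h T ω ≤ ξ ω)
    -- η is exponentially distributed with unit mean, independent by the product construction
    (η : Ω' → ℝ) (hη : Measurable η)
    (hηlaw : ∀ t : ℝ, 0 ≤ t → P' {ω' | t < η ω'} = ENNReal.ofReal (Real.exp (-t)))
    -- the filtration generated by (W, N), N_t = 1_{η ≤ t}, on the product space
    (hWN : ∀ t : ℝ, StronglyMeasurable
      fun ωb : Ω × Ω' => (W t ωb.1, if η ωb.2 ≤ t then (1:ℝ) else 0))
    (Fb : Filtration ℝ (inferInstance : MeasurableSpace (Ω × Ω')))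
    (hFb : Fb = Filtration.natural
      (fun t ωb => (W t ωb.1, if η ωb.2 ≤ t then (1:ℝ) else 0)) hWN)
    -- the stochastic integral SI Z t = ∫_t^T Z_s dW_s on the product space
    (SI : (ℝ → Ω × Ω' → (Fin m → ℝ)) → ℝ → Ω × Ω' → ℝ)
    (hSI_T : ∀ Z ωb, SI Z T ωb = 0)
    (hSI_adapted : ∀ Z, MemH2 Fb (P.prod P') T Z →
      Adapted Fb fun t ωb => SI Z 0 ωb - SI Z t ωb)
    (hSI_mart : ∀ Z, MemH2 Fb (P.prod P') T Z → ∀ s t : ℝ, 0 ≤ s → s ≤ t → t ≤ T →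
      (P.prod P')[fun ωb => SI Z s ωb - SI Z t ωb | Fb s] =ᵐ[P.prod P'] fun _ => 0)
    -- (Y', Z', U', K') is any solution of the constrained BSDE
    (Y' : ℝ → Ω × Ω' → ℝ) (Z' : ℝ → Ω × Ω' → Fin m → ℝ)
    (U' : ℝ → Ω × Ω' → ℝ) (K' : ℝ → Ω × Ω' → ℝ)
    (hsol : ConstrainedBSDESolution (P.prod P') Fb T f h ξ η SI Y' Z' U' K') :
    ∀ᵐ ωb ∂(P.prod P'), ∀ t ∈ Set.Icc (0:ℝ) T,
      (if T ≤ η ωb.2 then ξ ωb.1 else 0)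
        + (∫ s in (min t (η ωb.2))..(min T (η ωb.2)), f s ωb.1)
        + (if t < η ωb.2 ∧ η ωb.2 ≤ T then h (η ωb.2) ωb.1 else 0)
      ≤ Y' t ωb + SI Z' t ωb := by
  classical
  have hηs : Measurable fun ωb : Ω × Ω' => η ωb.2 := hη.comp measurable_snd
  -- Step 1: joint measurability and a.e. integrability of f
  have hfj : Measurable fun p : ℝ × Ω => f p.1 p.2 :=
    hf.1.mono (predictableSigma_le' F) le_rfl
  have hfsec : ∀ ω, Measurable fun s => f s ω := fun ω =>
    hfj.comp (measurable_id.prodMk measurable_const)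
  have hfint_ae : ∀ᵐ ω ∂P, IntegrableOn (fun s => f s ω) (Set.Icc 0 T) volume := by
    have hunc : Measurable fun p : ℝ × Ω => ((‖f p.1 p.2‖₊ : ℝ≥0∞)) ^ 2 :=
      hfj.nnnorm.coe_nnreal_ennreal.pow_const 2
    have hmeasI : Measurable fun ω =>
        ∫⁻ s in Set.Ioc (0:ℝ) T, ((‖f s ω‖₊ : ℝ≥0∞)) ^ 2 ∂volume :=
      Measurable.lintegral_prod_left
        (f := fun s ω => ((‖f s ω‖₊ : ℝ≥0∞)) ^ 2) hunc
    have h1 := ae_lt_top hmeasI hf.2.ne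
    filter_upwards [h1] with ω hω
    have hres : (volume.restrict (Set.Icc (0:ℝ) T)) = volume.restrict (Set.Ioc (0:ℝ) T) :=
      (Measure.restrict_congr_set Ioc_ae_eq_Icc).symm
    refine ⟨(hfsec ω).aestronglyMeasurable, ?_⟩
    show (∫⁻ s, ((‖f s ω‖₊ : ℝ≥0∞)) ∂(volume.restrict (Set.Icc (0:ℝ) T))) < ⊤
    rw [hres]
    calc ∫⁻ s, ((‖f s ω‖₊ : ℝ≥0∞)) ∂(volume.restrict (Set.Ioc (0:ℝ) T))
        ≤ ∫⁻ s, (1 + ((‖f s ω‖₊ : ℝ≥0∞)) ^ 2) ∂(volume.restrict (Set.Ioc (0:ℝ) T)) := by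
          refine lintegral_mono fun s => ?_
          rcases le_total ((‖f s ω‖₊ : ℝ≥0∞)) 1 with hx | hx
          · exact hx.trans le_self_add
          · calc ((‖f s ω‖₊ : ℝ≥0∞)) ≤ ((‖f s ω‖₊ : ℝ≥0∞)) ^ 2 := by
                  rw [pow_two]; exact le_mul_of_one_le_left bot_le hx
              _ ≤ 1 + ((‖f s ω‖₊ : ℝ≥0∞)) ^ 2 := le_add_self
      _ = volume (Set.Ioc (0:ℝ) T)
          + ∫⁻ s in Set.Ioc (0:ℝ) T, ((‖f s ω‖₊ : ℝ≥0∞)) ^ 2 ∂volume := by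
          rw [lintegral_add_left measurable_const, lintegral_one,
            Measure.restrict_apply_univ]
      _ < ⊤ := by
          rw [Real.volume_Ioc]
          exact ENNReal.add_lt_top.2 ⟨ENNReal.ofReal_lt_top, hω⟩
  have hmapfst : (P.prod P').map Prod.fst = P := by
    rw [Measure.map_fst_prod]; simp
  have hfa : ∀ᵐ ωb ∂(P.prod P'), IntegrableOn (fun s => f s ωb.1) (Set.Icc 0 T) volume := by
    rw [← hmapfst] at hfint_ae
    exact ae_of_ae_map measurable_fst.aemeasurable hfint_ae
  -- Step 2: the two measures on ℝ × (Ω × Ω')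
  set E : Set (Ω × Ω') := Set.univ ×ˢ (η ⁻¹' Set.Ioc 0 T) with hE
  set j : Ω × Ω' → ℝ × (Ω × Ω') := fun ωb => (η ωb.2, ωb) with hjdef
  have hj : Measurable j := hηs.prodMk measurable_id
  have hc : Measurable fun ωb : Ω × Ω' => min T (η ωb.2) := measurable_const.min hηs
  set κ : Kernel (Ω × Ω') ℝ := iocKernel (fun ωb : Ω × Ω' => min T (η ωb.2)) hc with hκdef
  haveI : IsFiniteKernel κ := by
    refine ⟨⟨ENNReal.ofReal T, ENNReal.ofReal_lt_top, fun ωb => ?_⟩⟩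
    rw [hκdef, iocKernel_apply, Measure.restrict_apply_univ, Real.volume_Ioc]
    exact ENNReal.ofReal_le_ofReal (by simpa using min_le_left T (η ωb.2))
  set ρ₁ : Measure (ℝ × (Ω × Ω')) := Measure.map j ((P.prod P').restrict E) with hρ₁
  set ρ₂ : Measure (ℝ × (Ω × Ω')) := Measure.map Prod.swap ((P.prod P') ⊗ₘ κ) with hρ₂
  have hle := predictableSigma_le' Fb
  -- the exponential distribution of η over intervals
  have hIoc : ∀ α' β' : ℝ, 0 ≤ α' → α' ≤ β' →
      P' (η ⁻¹' Set.Ioc α' β') = ENNReal.ofReal (Real.exp (-α') - Real.exp (-β')) := by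
    intro α' β' hα' hαβ'
    have hsplit : {ω' | α' < η ω'} = (η ⁻¹' Set.Ioc α' β') ∪ {ω' | β' < η ω'} := by
      ext ω'
      simp only [Set.mem_setOf_eq, Set.mem_union, Set.mem_preimage, Set.mem_Ioc]
      constructor
      · intro hlt
        rcases le_or_gt (η ω') β' with h2 | h2
        · exact Or.inl ⟨hlt, h2⟩
        · exact Or.inr h2
      · rintro (⟨h2, _⟩ | h2)
        · exact h2
        · linarith
    have hdisj : Disjoint (η ⁻¹' Set.Ioc α' β') {ω' | β' < η ω'} := by
      rw [Set.disjoint_left]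
      rintro ω' ⟨_, h2⟩ h3
      exact absurd h3 (not_lt.2 h2)
    have hmeas1 : MeasurableSet {ω' | β' < η ω'} := measurableSet_lt measurable_const hη
    have hun := measure_union (μ := P') hdisj hmeas1
    rw [← hsplit, hηlaw α' hα', hηlaw β' (hα'.trans hαβ')] at hun
    rw [ENNReal.ofReal_sub _ (Real.exp_pos _).le]
    exact ENNReal.eq_sub_of_add_eq ENNReal.ofReal_ne_top hun.symm
  -- generator equality
  have hgen : ∀ s ∈ {s : Set (ℝ × (Ω × Ω')) |
      (∃ a b : ℝ, ∃ A : Set (Ω × Ω'), MeasurableSet[Fb a] A ∧ s = Set.Ioc a b ×ˢ A) ∨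
      ∃ A : Set (Ω × Ω'), MeasurableSet[Fb 0] A ∧ s = ({0} : Set ℝ) ×ˢ A},
      ρ₁ s = ρ₂ s := by
    rintro s (⟨a, b, A, hA, rfl⟩ | ⟨A, hA, rfl⟩)
    · have hAmeas : MeasurableSet A := Fb.le a A hA
      have hDmeas : MeasurableSet (Set.Ioc a b ×ˢ A) := measurableSet_Ioc.prod hAmeas
      have hρ₁s : ρ₁ (Set.Ioc a b ×ˢ A)
          = (P.prod P') (A ∩ (Set.univ ×ˢ (η ⁻¹' Set.Ioc (max a 0) (min b T)))) := by
        rw [hρ₁, Measure.map_apply hj hDmeas, Measure.restrict_apply (hj hDmeas)]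
        congr 1
        ext ⟨ω, ω'⟩
        simp only [hjdef, hE, Set.mem_inter_iff, Set.mem_preimage, Set.mem_prod,
          Set.mem_univ, true_and, Set.mem_Ioc, max_lt_iff, le_min_iff]
        tauto
      have hρ₂s : ρ₂ (Set.Ioc a b ×ˢ A)
          = ∫⁻ ωb, κ ωb (Prod.mk ωb ⁻¹' (A ×ˢ Set.Ioc a b)) ∂(P.prod P') := by
        rw [hρ₂, Measure.map_apply measurable_swap hDmeas]
        have hsw : Prod.swap ⁻¹' (Set.Ioc a b ×ˢ A) = A ×ˢ Set.Ioc a b := by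
          ext ⟨x, s⟩; simp [and_comm]
        rw [hsw, Measure.compProd_apply (hAmeas.prod measurableSet_Ioc)]
      by_cases hab : max a 0 < min b T
      · obtain ⟨B, hB, hAB⟩ := natural_trace W F hWadapted η hWN (max a 0) A
          (by rw [hFb] at hA
              exact (Filtration.natural _ hWN).mono (le_max_left a 0) A hA)
        have hmem : ∀ ωb : Ω × Ω', max a 0 < η ωb.2 → (ωb ∈ A ↔ ωb.1 ∈ B) := by
          intro ωb hωb
          have hx := Set.ext_iff.mp hAB ωb
          simp only [Set.mem_inter_iff, Set.mem_prod, Set.mem_univ, true_and, and_true,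
            Set.mem_setOf_eq] at hx
          tauto
        have h1 : ρ₁ (Set.Ioc a b ×ˢ A)
            = P B * P' (η ⁻¹' Set.Ioc (max a 0) (min b T)) := by
          rw [hρ₁s]
          have hprod : A ∩ (Set.univ ×ˢ (η ⁻¹' Set.Ioc (max a 0) (min b T)))
              = B ×ˢ (η ⁻¹' Set.Ioc (max a 0) (min b T)) := by
            ext ⟨ω, ω'⟩
            simp only [Set.mem_inter_iff, Set.mem_prod, Set.mem_univ, true_and,
              Set.mem_preimage, Set.mem_Ioc]
            constructor
            · rintro ⟨hmemA, h2⟩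
              exact ⟨(hmem (ω, ω') h2.1).1 hmemA, h2⟩
            · rintro ⟨hmemB, h2⟩
              exact ⟨(hmem (ω, ω') h2.1).2 hmemB, h2⟩
          rw [hprod, Measure.prod_prod]
        have hge1 : AEMeasurable (fun ω : Ω => Set.indicator B (1 : Ω → ℝ≥0∞) ω) P :=
          ((measurable_one).indicator hB).aemeasurable
        have hge2 : AEMeasurable
            (fun ω' : Ω' => ENNReal.ofReal (min (min b T) (η ω') - max a 0)) P' :=
          (((measurable_const.min hη).sub measurable_const).ennreal_ofReal).aemeasurable
        have h2 : ρ₂ (Set.Ioc a b ×ˢ A)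
            = P B * ENNReal.ofReal (Real.exp (-(max a 0)) - Real.exp (-(min b T))) := by
          rw [hρ₂s]
          have hker : ∀ ωb : Ω × Ω', κ ωb (Prod.mk ωb ⁻¹' (A ×ˢ Set.Ioc a b))
              = (fun ω : Ω => Set.indicator B (1 : Ω → ℝ≥0∞) ω) ωb.1
                * (fun ω' : Ω' => ENNReal.ofReal (min (min b T) (η ω') - max a 0)) ωb.2 := by
            intro ωb
            simp only
            have hpre : Prod.mk ωb ⁻¹' (A ×ˢ Set.Ioc a b)
                = if ωb ∈ A then Set.Ioc a b else ∅ := by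
              split_ifs with hmemA <;> ext s <;> simp [hmemA]
            rw [hκdef, iocKernel_apply, hpre]
            by_cases hcase : max a 0 < η ωb.2
            · have hiff := hmem ωb hcase
              by_cases hmemA : ωb ∈ A
              · rw [if_pos hmemA, Measure.restrict_apply measurableSet_Ioc,
                  Set.Ioc_inter_Ioc, Real.volume_Ioc,
                  Set.indicator_of_mem (hiff.1 hmemA), Pi.one_apply, one_mul]
                congr 1
                rw [min_assoc]
              · rw [if_neg hmemA, measure_empty,
                  Set.indicator_of_notMem (fun hB' => hmemA (hiff.2 hB')), zero_mul]
            · have he : η ωb.2 ≤ max a 0 := not_lt.1 hcase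
              have hz : ENNReal.ofReal (min (min b T) (η ωb.2) - max a 0) = 0 :=
                ENNReal.ofReal_eq_zero.2
                  (by linarith [min_le_right (min b T) (η ωb.2)])
              rw [hz, mul_zero]
              split_ifs with hmemA
              · rw [Measure.restrict_apply measurableSet_Ioc, Set.Ioc_inter_Ioc,
                  Real.volume_Ioc]
                refine ENNReal.ofReal_eq_zero.2 ?_
                have h3 : min b (min T (η ωb.2)) ≤ η ωb.2 :=
                  (min_le_right _ _).trans (min_le_right T _)
                linarith
              · exact measure_empty
          rw [lintegral_congr hker, lintegral_prod_mul hge1 hge2,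
            lintegral_indicator_one hB,
            expMinLintegral P' η hη hηlaw (max a 0) (min b T) (le_max_right a 0) hab.le]
        rw [h1, h2, hIoc (max a 0) (min b T) (le_max_right a 0) hab.le]
      · have hβα : min b T ≤ max a 0 := not_lt.1 hab
        have h1 : ρ₁ (Set.Ioc a b ×ˢ A) = 0 := by
          rw [hρ₁s]
          have hempty : η ⁻¹' Set.Ioc (max a 0) (min b T) = ∅ := by
            rw [Set.Ioc_eq_empty (not_lt.2 hβα), Set.preimage_empty]
          rw [hempty]
          simp
        have h2 : ρ₂ (Set.Ioc a b ×ˢ A) = 0 := by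
          rw [hρ₂s]
          have hker : ∀ ωb : Ω × Ω', κ ωb (Prod.mk ωb ⁻¹' (A ×ˢ Set.Ioc a b)) = 0 := by
            intro ωb
            refine measure_mono_null (fun s hs => hs.2) ?_
            rw [hκdef, iocKernel_apply, Measure.restrict_apply measurableSet_Ioc,
              Set.Ioc_inter_Ioc, Real.volume_Ioc]
            refine ENNReal.ofReal_eq_zero.2 ?_
            have h3 : min b (min T (η ωb.2)) ≤ min b T :=
              min_le_min le_rfl (min_le_left T _)
            linarith
          rw [lintegral_congr hker, lintegral_zero]
        rw [h1, h2]
    · have hAmeas : MeasurableSet A := Fb.le 0 A hA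
      have hDmeas : MeasurableSet (({0} : Set ℝ) ×ˢ A) :=
        (measurableSet_singleton 0).prod hAmeas
      have h1 : ρ₁ (({0} : Set ℝ) ×ˢ A) = 0 := by
        rw [hρ₁, Measure.map_apply hj hDmeas, Measure.restrict_apply (hj hDmeas)]
        have hempty : j ⁻¹' (({0} : Set ℝ) ×ˢ A) ∩ E = ∅ := by
          ext ⟨ω, ω'⟩
          simp only [hjdef, hE, Set.mem_inter_iff, Set.mem_preimage, Set.mem_prod,
            Set.mem_singleton_iff, Set.mem_univ, true_and, Set.mem_Ioc,
            Set.mem_empty_iff_false, iff_false]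
          rintro ⟨⟨h0, _⟩, ⟨h1', _⟩⟩
          linarith
        rw [hempty, measure_empty]
      have h2 : ρ₂ (({0} : Set ℝ) ×ˢ A) = 0 := by
        rw [hρ₂, Measure.map_apply measurable_swap hDmeas]
        have hsw : Prod.swap ⁻¹' (({0} : Set ℝ) ×ˢ A) = A ×ˢ ({0} : Set ℝ) := by
          ext ⟨x, s⟩; simp [and_comm]
        rw [hsw, Measure.compProd_apply (hAmeas.prod (measurableSet_singleton 0))]
        have hker : ∀ ωb : Ω × Ω', κ ωb (Prod.mk ωb ⁻¹' (A ×ˢ ({0} : Set ℝ))) = 0 := by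
          intro ωb
          refine measure_mono_null (fun s hs => hs.2) ?_
          rw [hκdef, iocKernel_apply, Measure.restrict_apply (measurableSet_singleton 0)]
          exact measure_mono_null Set.inter_subset_left Real.volume_singleton
        rw [lintegral_congr hker, lintegral_zero]
      rw [h1, h2]
  -- univ equality
  have huniv : ρ₁ Set.univ = ρ₂ Set.univ := by
    have h1 : ρ₁ Set.univ = P' (η ⁻¹' Set.Ioc 0 T) := by
      rw [hρ₁, Measure.map_apply hj MeasurableSet.univ, Set.preimage_univ,
        Measure.restrict_apply MeasurableSet.univ, Set.univ_inter, hE,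
        Measure.prod_prod, measure_univ, one_mul]
    have h2 : ρ₂ Set.univ = ENNReal.ofReal (Real.exp (-(0:ℝ)) - Real.exp (-T)) := by
      rw [hρ₂, Measure.map_apply measurable_swap MeasurableSet.univ, Set.preimage_univ,
        Measure.compProd_apply MeasurableSet.univ]
      have hker : ∀ ωb : Ω × Ω',
          κ ωb (Prod.mk ωb ⁻¹' (Set.univ : Set ((Ω × Ω') × ℝ)))
            = (fun _ : Ω => (1:ℝ≥0∞)) ωb.1
              * (fun ω' : Ω' => ENNReal.ofReal (min T (η ω') - 0)) ωb.2 := by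
        intro ωb
        rw [Set.preimage_univ, hκdef, iocKernel_apply, Measure.restrict_apply_univ,
          Real.volume_Ioc, one_mul]
      rw [lintegral_congr hker,
        lintegral_prod_mul (g := fun ω' : Ω' => ENNReal.ofReal (min T (η ω') - 0))
          aemeasurable_const
          ((((measurable_const.min hη).sub measurable_const).ennreal_ofReal).aemeasurable),
        lintegral_one, measure_univ, one_mul]
      have := expMinLintegral P' η hη hηlaw 0 T le_rfl hT.le
      simpa using this
    rw [h1, h2, hIoc 0 T le_rfl hT.le]
  -- π-system
  have hpi : IsPiSystem {s : Set (ℝ × (Ω × Ω')) |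
      (∃ a b : ℝ, ∃ A : Set (Ω × Ω'), MeasurableSet[Fb a] A ∧ s = Set.Ioc a b ×ˢ A) ∨
      ∃ A : Set (Ω × Ω'), MeasurableSet[Fb 0] A ∧ s = ({0} : Set ℝ) ×ˢ A} := by
    rintro s₁ (⟨a, b, A, hA, rfl⟩ | ⟨A, hA, rfl⟩) s₂
      (⟨a', b', A', hA', rfl⟩ | ⟨A', hA', rfl⟩) hne
    · exact Or.inl ⟨max a a', min b b', A ∩ A',
        (Fb.mono (le_max_left a a') A hA).inter (Fb.mono (le_max_right a a') A' hA'),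
        by rw [Set.prod_inter_prod, Set.Ioc_inter_Ioc]⟩
    · obtain ⟨p, hp1, hp2⟩ := hne
      have h0 : (0:ℝ) ∈ Set.Ioc a b := by
        have := hp2.1
        rw [Set.mem_singleton_iff] at this
        rw [← this]; exact hp1.1
      refine Or.inr ⟨A ∩ A', (Fb.mono h0.1.le A hA).inter hA', ?_⟩
      rw [Set.prod_inter_prod]
      congr 1
      exact Set.inter_eq_right.2 (Set.singleton_subset_iff.2 h0)
    · obtain ⟨p, hp1, hp2⟩ := hne
      have h0 : (0:ℝ) ∈ Set.Ioc a' b' := by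
        have := hp1.1
        rw [Set.mem_singleton_iff] at this
        rw [← this]; exact hp2.1
      refine Or.inr ⟨A ∩ A', hA.inter (Fb.mono h0.1.le A' hA'), ?_⟩
      rw [Set.prod_inter_prod]
      congr 1
      exact Set.inter_eq_left.2 (Set.singleton_subset_iff.2 h0)
    · exact Or.inr ⟨A ∩ A', hA.inter hA', by rw [Set.prod_inter_prod, Set.inter_self]⟩
  -- conclude measure equality on the predictable σ-algebra
  haveI hfin₁ : IsFiniteMeasure ρ₁ := by
    constructor
    rw [hρ₁, Measure.map_apply hj MeasurableSet.univ, Set.preimage_univ]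
    exact measure_lt_top _ _
  haveI hfin₂ : IsFiniteMeasure ρ₂ := by
    constructor
    rw [hρ₂, Measure.map_apply measurable_swap MeasurableSet.univ, Set.preimage_univ]
    exact measure_lt_top _ _
  haveI hfint : IsFiniteMeasure (ρ₁.trim hle) := by
    constructor
    rw [trim_measurableSet_eq hle MeasurableSet.univ]
    exact measure_lt_top _ _
  have htrim : ρ₁.trim hle = ρ₂.trim hle := by
    refine ext_of_generate_finite _ rfl hpi ?_ ?_
    · intro s hs
      rw [trim_measurableSet_eq hle (MeasurableSpace.measurableSet_generateFrom hs),
        trim_measurableSet_eq hle (MeasurableSpace.measurableSet_generateFrom hs)]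
      exact hgen s hs
    · rw [trim_measurableSet_eq hle MeasurableSet.univ,
        trim_measurableSet_eq hle MeasurableSet.univ]
      exact huniv
  have hmain : ∀ D : Set (ℝ × (Ω × Ω')), MeasurableSet[predictableSigma Fb] D →
      ρ₁ D = ρ₂ D := by
    intro D hD
    calc ρ₁ D = ρ₁.trim hle D := (trim_measurableSet_eq hle hD).symm
      _ = ρ₂.trim hle D := by rw [htrim]
      _ = ρ₂ D := trim_measurableSet_eq hle hD
  -- Step 3: the jump value is nonpositive a.s.
  have hU'meas : Measurable[predictableSigma Fb] fun p : ℝ × (Ω × Ω') => U' p.1 p.2 :=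
    hsol.2.2.1.1
  have hD : MeasurableSet[predictableSigma Fb] {p : ℝ × (Ω × Ω') | 0 < U' p.1 p.2} :=
    hU'meas measurableSet_Ioi
  have hDm : MeasurableSet {p : ℝ × (Ω × Ω') | 0 < U' p.1 p.2} := hle _ hD
  have hρ₂D : ρ₂ {p : ℝ × (Ω × Ω') | 0 < U' p.1 p.2} = 0 := by
    rw [hρ₂, Measure.map_apply measurable_swap hDm,
      Measure.compProd_apply (measurable_swap hDm)]
    have hae : ∀ᵐ ωb ∂(P.prod P'),
        κ ωb (Prod.mk ωb ⁻¹' (Prod.swap ⁻¹' {p : ℝ × (Ω × Ω') | 0 < U' p.1 p.2})) = 0 := by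
      filter_upwards [hsol.2.2.2.2.1] with ωb hωb
      have hset : Prod.mk ωb ⁻¹' (Prod.swap ⁻¹' {p : ℝ × (Ω × Ω') | 0 < U' p.1 p.2})
          = {s : ℝ | ¬ U' s ωb ≤ 0} := by
        ext s; simp [not_le]
      rw [hset, hκdef, iocKernel_apply]
      exact ae_iff.mp hωb
    rw [lintegral_congr_ae hae, lintegral_zero]
  have hU_ae : ∀ᵐ ωb ∂(P.prod P'), ¬ (0 < U' (η ωb.2) ωb ∧ ωb ∈ E) := by
    have h0 : (P.prod P') (j ⁻¹' {p : ℝ × (Ω × Ω') | 0 < U' p.1 p.2} ∩ E) = 0 := by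
      have hmm := hmain _ hD
      rw [hρ₂D, hρ₁, Measure.map_apply hj hDm, Measure.restrict_apply (hj hDm)] at hmm
      exact hmm
    filter_upwards [measure_eq_zero_iff_ae_notMem.mp h0] with ωb hωb
    rintro ⟨h1, h2⟩
    exact hωb ⟨h1, h2⟩
  -- Step 4: final assembly
  filter_upwards [hsol.2.2.2.2.2, hU_ae, hfa] with ωb heq hU hint
  intro t ht
  have heqt := heq t ht
  have hfeq : (∫ s in t..T, (if s ≤ η ωb.2 then f s ωb.1 else 0))
      = ∫ s in min t (η ωb.2)..min T (η ωb.2), f s ωb.1 :=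
    integral_indicator_min ht.1 ht.2 (hfsec ωb.1) hint
  have hK : K' t ωb ≤ K' T ωb :=
    hsol.2.2.2.1.2.2.1 ωb ⟨ht.1, ht.2⟩ ⟨hT.le, le_refl T⟩ ht.2
  have hjump : (if t < η ωb.2 ∧ η ωb.2 ≤ T then U' (η ωb.2) ωb else 0) ≤ 0 := by
    split_ifs with hcond
    · by_contra hpos
      push_neg at hpos
      refine hU ⟨hpos, ?_⟩
      rw [hE]
      exact ⟨trivial, lt_of_le_of_lt ht.1 hcond.1, hcond.2⟩
    · exact le_rfl
  rw [hfeq] at heqt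
  linarith [heqt, hK, hjump]


end OSRand
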